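/- Let (X, δ) be a diversity. For x ∈ X define κ_x : P_fin(X) → ℝ by κ_x(A) = δ(A ∪ {x}). Then each κ_x is an admissible function on X, and the map x ↦ κ_x embeds (X, δ) into (E(X), δ̂): for every finite subset {x₁, …, x_n} ⊆ X, δ̂({κ_{x₁}, …, κ_{x_n}}) = δ({x₁, …, x_n}). -/

import Mathlib

open scoped Classical

/-- A diversity on `X`: a real-valued function on finite subsets satisfying
(D1) nonnegativity with `δ A = 0 ↔ |A| ≤ 1`, and (D2) the triangle inequality. -/
structure Diversity (X : Type*) where
  δ : Finset X → ℝ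
  nonneg : ∀ A : Finset X, 0 ≤ δ A
  eq_zero_iff : ∀ A : Finset X, δ A = 0 ↔ A.card ≤ 1
  triangle : ∀ A B C : Finset X, B.Nonempty → δ (A ∪ C) ≤ δ (A ∪ B) + δ (B ∪ C)

/-- An admissible function on a diversity (a one-point extension). -/
structure IsAdmissible {X : Type*} (D : Diversity X) (f : Finset X → ℝ) : Prop where
  empty : f ∅ = 0
  le : ∀ A : Finset X, D.δ A ≤ f A
  tri : ∀ A B C : Finset X, C.Nonempty → f (A ∪ B) ≤ f (A ∪ C) + D.δ (B ∪ C)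
  subadd : ∀ A B : Finset X, f (A ∪ B) ≤ f A + f B

/-- Restriction of a diversity to a subset. -/
noncomputable def Diversity.restrict {X : Type*} (D : Diversity X) (S : Set X) : Diversity S where
  δ A := D.δ (A.image Subtype.val)
  nonneg A := D.nonneg _
  eq_zero_iff A := by
    rw [D.eq_zero_iff, Finset.card_image_of_injective _ Subtype.val_injective]
  triangle A B C hB := by
    have h := D.triangle (A.image Subtype.val) (B.image Subtype.val) (C.image Subtype.val)
      (hB.image _)
    simpa [Finset.image_union] using h

/-- Separability of the induced metric `d a b = δ {a, b}`. -/
def Diversity.SeparableD {X : Type*} (D : Diversity X) : Prop :=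
  ∃ s : Set X, s.Countable ∧ ∀ x : X, ∀ ε : ℝ, 0 < ε → ∃ y ∈ s, D.δ {x, y} < ε

/-- Completeness of the induced metric `d a b = δ {a, b}`. -/
def Diversity.CompleteD {X : Type*} (D : Diversity X) : Prop :=
  ∀ u : ℕ → X, (∀ ε : ℝ, 0 < ε → ∃ N : ℕ, ∀ m ≥ N, ∀ n ≥ N, D.δ {u m, u n} < ε) →
    ∃ x : X, ∀ ε : ℝ, 0 < ε → ∃ N : ℕ, ∀ n ≥ N, D.δ {u n, x} < ε

/-- The diversity `δ̂` on (finite sets of) admissible functions. -/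
noncomputable def hatδ {X : Type*} (F : Finset (Finset X → ℝ)) : ℝ :=
  if F.card ≤ 1 then 0
  else sSup { r : ℝ | ∃ j ∈ F, ∃ A : (Finset X → ℝ) → Finset X,
    r = j ((F.erase j).biUnion A) - ∑ i ∈ F.erase j, i (A i) }

/-- The canonical maximal extension `f_S^X` of an admissible function on `S ⊆ X`. -/
noncomputable def extFun {X : Type*} (D : Diversity X) (S : Set X) (f : Finset S → ℝ)
    (A : Finset X) : ℝ :=
  sInf { r : ℝ | ∃ (B : Finset S) (As : S → Finset X),
    B.biUnion As = A ∧ r = f B + ∑ b ∈ B, D.δ (insert (b : X) (As b)) }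

/-- An admissible function is finitely supported if it is the canonical extension
of an admissible function on some finite nonempty `S ⊆ X`. -/
def FinitelySupported {X : Type*} (D : Diversity X) (f : Finset X → ℝ) : Prop :=
  ∃ S : Set X, S.Finite ∧ S.Nonempty ∧ ∃ g : Finset S → ℝ,
    IsAdmissible (D.restrict S) g ∧ f = extFun D S g

/-- The extension property for a diversity. -/
def Diversity.ExtensionProp {X : Type*} (D : Diversity X) : Prop :=
  ∀ F : Finset X, ∀ f : Finset ((F : Set X)) → ℝ,
    IsAdmissible (D.restrict (F : Set X)) f →
    ∃ x : X, ∀ A : Finset ((F : Set X)), D.δ (insert x (A.image Subtype.val)) = f A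

/-- The approximate extension property for a diversity. -/
def Diversity.ApproxExtensionProp {X : Type*} (D : Diversity X) : Prop :=
  ∀ F : Finset X, ∀ f : Finset ((F : Set X)) → ℝ,
    IsAdmissible (D.restrict (F : Set X)) f →
    ∀ ε : ℝ, 0 < ε →
      ∃ x : X, ∀ A : Finset ((F : Set X)), |D.δ (insert x (A.image Subtype.val)) - f A| ≤ ε

/-- Ultrahomogeneity: isomorphisms between finite subsets extend to automorphisms. -/
def Diversity.Ultrahomogeneous {X : Type*} (D : Diversity X) : Prop :=
  ∀ (A A' : Finset X) (φ : ((A : Set X)) → ((A' : Set X))), Function.Bijective φ →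
    (∀ B : Finset ((A : Set X)),
      D.δ (B.image (fun b => (φ b : X))) = D.δ (B.image Subtype.val)) →
    ∃ Φ : X → X, Function.Bijective Φ ∧ (∀ C : Finset X, D.δ (C.image Φ) = D.δ C) ∧
      ∀ a : ((A : Set X)), Φ a = (φ a : X)

/-! Admissibility of `κ_x` is (D1)–(D2) applied to sets containing `x`. For the embedding,
applying (D2) once for each point `y` of `A \ {z}` gives `κ_z(⋃ A_y) ≤ δ(A) + Σ κ_y(A_y)`, so every
quantity in the supremum defining `δ̂` is at most `δ(A)`; the choice `A_y = {y}` makes every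
`κ_y(A_y)` vanish and attains `δ(A)`. -/

namespace Diversity

variable {X : Type*} (D : Diversity X)

noncomputable def kappa (x : X) : Finset X → ℝ := fun A => D.δ (insert x A)

lemma δ_singleton (x : X) : D.δ {x} = 0 :=
  (D.eq_zero_iff _).2 (Finset.card_singleton x).le

lemma δ_le_δ_insert (x : X) (A : Finset X) : D.δ A ≤ D.δ (insert x A) := by
  have h := D.triangle A {x} ∅ (Finset.singleton_nonempty x)
  rwa [Finset.union_empty, Finset.union_empty, D.δ_singleton, add_zero, Finset.union_comm,
    ← Finset.insert_eq] at h

lemma δ_union_biUnion_le (T : Finset X) (S : Finset X) (g : X → Finset X) :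
    D.δ (S ∪ T.biUnion g) ≤ D.δ (S ∪ T) + ∑ y ∈ T, D.δ (insert y (g y)) := by
  induction T using Finset.induction_on generalizing S with
  | empty => simp
  | @insert y T hy ih =>
    have hstep := D.triangle (S ∪ T.biUnion g) {y} (g y) (Finset.singleton_nonempty y)
    rw [Finset.union_comm _ {y}, ← Finset.insert_eq, ← Finset.insert_eq] at hstep
    have hrest := ih (insert y S)
    rw [Finset.biUnion_insert, Finset.sum_insert hy, Finset.union_insert, ← Finset.union_assoc,
      Finset.union_right_comm S (g y)]
    simp only [Finset.insert_union] at hrest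
    linarith

lemma isAdmissible_kappa (x : X) : IsAdmissible D (D.kappa x) where
  empty := D.δ_singleton x
  le A := D.δ_le_δ_insert x A
  tri A B C hC := by
    have h := D.triangle (insert x A) C B hC
    rwa [Finset.insert_union, Finset.insert_union, Finset.union_comm C B] at h
  subadd A B := by
    simpa [kappa, Finset.insert_union, Finset.union_insert] using
      D.triangle (insert x A) {x} (insert x B) (Finset.singleton_nonempty x)

lemma kappa_injective : Function.Injective D.kappa := by
  intro x y hxy
  have h : D.δ {y, x} = 0 := by
    simpa [kappa, D.δ_singleton] using (congrFun hxy {x}).symm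
  by_contra hne
  have := (D.eq_zero_iff _).1 h
  rw [Finset.card_pair (Ne.symm hne)] at this
  omega

lemma kappa_sub_sum_le {A : Finset X} {z : X} (hz : z ∈ A) (g : X → Finset X) :
    D.kappa z ((A.erase z).biUnion g) - ∑ y ∈ A.erase z, D.kappa y (g y) ≤ D.δ A := by
  have h := D.δ_union_biUnion_le (A.erase z) {z} g
  rw [← Finset.insert_eq, ← Finset.insert_eq, Finset.insert_erase hz] at h
  simp only [kappa]
  linarith

lemma kappa_sub_sum_singleton {A : Finset X} {z : X} (hz : z ∈ A) :
    D.kappa z ((A.erase z).biUnion fun y => {y}) - ∑ y ∈ A.erase z, D.kappa y {y} = D.δ A := by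
  simp [kappa, D.δ_singleton, Finset.insert_erase hz]

lemma hatδ_image_kappa (A : Finset X) : hatδ (A.image D.kappa) = D.δ A := by
  have hcard : (A.image D.kappa).card = A.card :=
    Finset.card_image_of_injective A D.kappa_injective
  unfold hatδ
  split_ifs with hA
  · exact ((D.eq_zero_iff A).2 (hcard ▸ hA)).symm
  obtain ⟨x, hx⟩ : A.Nonempty := Finset.card_pos.1 (by omega)
  have hinj := D.kappa_injective
  have : Nonempty X := ⟨x⟩
  have himage (z : X) (G : (Finset X → ℝ) → Finset X) :
      ((A.image D.kappa).erase (D.kappa z)).biUnion G = (A.erase z).biUnion (G ∘ D.kappa) ∧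
      ∑ i ∈ (A.image D.kappa).erase (D.kappa z), i (G i)
        = ∑ y ∈ A.erase z, D.kappa y (G (D.kappa y)) := by
    rw [← Finset.image_erase hinj, Finset.image_biUnion,
      Finset.sum_image fun _ _ _ _ h => hinj h]
    exact ⟨rfl, rfl⟩
  refine IsGreatest.csSup_eq ⟨⟨D.kappa x, Finset.mem_image_of_mem _ hx,
    fun f => {Function.invFun D.kappa f}, ?_⟩, ?_⟩
  · obtain ⟨hU, hS⟩ := himage x fun f => {Function.invFun D.kappa f}
    rw [hU, hS, ← D.kappa_sub_sum_singleton hx]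
    simp only [Function.comp_def, Function.leftInverse_invFun hinj _]
  · rintro r ⟨j, hj, G, rfl⟩
    obtain ⟨z, hz, rfl⟩ := Finset.mem_image.1 hj
    obtain ⟨hU, hS⟩ := himage z G
    rw [hU, hS]
    exact D.kappa_sub_sum_le hz (G ∘ D.kappa)

end Diversity

/-- Each `κ_x = A ↦ δ(A ∪ {x})` is admissible and `x ↦ κ_x` embeds `(X, δ)` into
`(E(X), δ̂)`. -/
theorem stmt3 {X : Type*} (D : Diversity X) :
    (∀ x : X, IsAdmissible D (fun A => D.δ (insert x A))) ∧
    (∀ A : Finset X,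
      hatδ (A.image (fun x => (fun B => D.δ (insert x B) : Finset X → ℝ))) = D.δ A) :=
  ⟨D.isAdmissible_kappa, D.hatδ_image_kappa⟩
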